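/- Let B be a finite Blaschke product. Then for every ζ on the unit circle 𝕋, the limit as z → ζ with z ∈ 𝔻 of (1 − |B(z)|²)/(1 − |z|²) exists and equals |B'(ζ)|, and likewise the limit as z → ζ with z ∈ 𝔻 of (1 − |B(z)|)/(1 − |z|) equals |B'(ζ)|. -/

import Mathlib

/-!
For a single factor `b_a(w) = (a - w)/(1 - ā w)` one has
`1 - |b_a(w)|² = (1 - |a|²)(1 - |w|²)/|1 - ā w|²`, so the quotient by `1 - |w|²` extends
continuously to `ζ` with value `(1 - |a|²)/|1 - ā ζ|²`. Since
`1 - |f g|² = (1 - |f|²) + |f|²(1 - |g|²)` and `|b_a| → 1` at the circle, these boundary values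
add up over the factors of `B`. On the other hand `ζ b_a'(ζ) conj (b_a ζ)` is the same positive
number, and for factors unimodular at `ζ` the quantity `ζ B'(ζ) conj (B ζ)` is additive, so
`|B'(ζ)|` is the same sum. The second limit follows from the first because
`(1 - |B|)/(1 - |w|) = (1 - |B|²)/(1 - |w|²) · (1 + |w|)/(1 + |B|)`.
-/

open Complex ComplexConjugate Filter Topology
open Finset Metric

section Products

variable {ι : Type*}

theorem tendsto_one_sub_norm_prod_sq_div {α 𝕜 : Type*} [NormedField 𝕜] {l : Filter α}
    {g : α → ℝ} (s : Finset ι) {f : ι → α → 𝕜} {c : ι → ℝ}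
    (hf : ∀ i ∈ s, Tendsto (fun x => (1 - ‖f i x‖ ^ 2) / g x) l (𝓝 (c i)))
    (hf_norm : ∀ i ∈ s, Tendsto (fun x => ‖f i x‖) l (𝓝 1)) :
    Tendsto (fun x => (1 - ‖∏ i ∈ s, f i x‖ ^ 2) / g x) l (𝓝 (∑ i ∈ s, c i)) := by
  classical
  induction s using Finset.induction_on with
  | empty => simpa using tendsto_const_nhds
  | insert a s ha ih =>
    have hsplit : ∀ x, (1 - ‖∏ i ∈ insert a s, f i x‖ ^ 2) / g x =
        (1 - ‖f a x‖ ^ 2) / g x + ‖f a x‖ ^ 2 * ((1 - ‖∏ i ∈ s, f i x‖ ^ 2) / g x) := by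
      intro x
      rw [prod_insert ha, norm_mul]
      ring
    simp only [hsplit, sum_insert ha]
    simpa using (hf a (mem_insert_self a s)).add
      (((hf_norm a (mem_insert_self a s)).pow 2).mul
        (ih (fun i hi => hf i (mem_insert_of_mem hi))
          (fun i hi => hf_norm i (mem_insert_of_mem hi))))

theorem deriv_prod_mul_conj {𝕜 : Type*} [RCLike 𝕜] (s : Finset ι) {f : ι → 𝕜 → 𝕜} {x : 𝕜}
    (hf : ∀ i ∈ s, DifferentiableAt 𝕜 (f i) x) (hf_norm : ∀ i ∈ s, ‖f i x‖ = 1) :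
    deriv (fun w => ∏ i ∈ s, f i w) x * conj (∏ i ∈ s, f i x) =
      ∑ i ∈ s, deriv (f i) x * conj (f i x) := by
  classical
  induction s using Finset.induction_on with
  | empty => simp
  | insert a s ha ih =>
    have hfa := hf a (mem_insert_self a s)
    have hP : DifferentiableAt 𝕜 (fun w => ∏ i ∈ s, f i w) x :=
      DifferentiableAt.fun_finsetProd fun i hi => hf i (mem_insert_of_mem hi)
    have hfa_conj : f a x * conj (f a x) = 1 := by
      rw [RCLike.mul_conj, hf_norm a (mem_insert_self a s)]; simp
    have hP_conj : (∏ i ∈ s, f i x) * conj (∏ i ∈ s, f i x) = 1 := by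
      rw [RCLike.mul_conj, norm_prod, prod_eq_one fun i hi => hf_norm i (mem_insert_of_mem hi)]
      simp
    simp only [prod_insert ha, sum_insert ha]
    rw [deriv_fun_mul hfa hP, ← ih (fun i hi => hf i (mem_insert_of_mem hi))
      (fun i hi => hf_norm i (mem_insert_of_mem hi)), map_mul]
    linear_combination (deriv (f a) x * conj (f a x)) * hP_conj +
      (deriv (fun w => ∏ i ∈ s, f i w) x * conj (∏ i ∈ s, f i x)) * hfa_conj

end Products

theorem tendsto_one_sub_div_one_sub {α : Type*} {l : Filter α} {u v : α → ℝ} {L : ℝ}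
    (hu : Tendsto u l (𝓝 1)) (hv : Tendsto v l (𝓝 1))
    (h : Tendsto (fun x => (1 - v x ^ 2) / (1 - u x ^ 2)) l (𝓝 L)) :
    Tendsto (fun x => (1 - v x) / (1 - u x)) l (𝓝 L) := by
  have hfactor : Tendsto (fun x => (1 + u x) / (1 + v x)) l (𝓝 ((1 + 1) / (1 + 1))) :=
    (hu.const_add 1).div (hv.const_add 1) (by norm_num)
  rw [div_self (by norm_num)] at hfactor
  have hprod := h.mul hfactor
  rw [mul_one] at hprod
  refine hprod.congr' ?_
  filter_upwards [hu.eventually (lt_mem_nhds zero_lt_one),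
    hv.eventually (lt_mem_nhds zero_lt_one)] with x hux hvx
  rw [show 1 - v x ^ 2 = (1 - v x) * (1 + v x) by ring,
    show 1 - u x ^ 2 = (1 - u x) * (1 + u x) by ring, mul_div_mul_comm, mul_assoc,
    div_mul_div_comm, mul_comm (1 + v x), div_self (mul_pos (by linarith) (by linarith)).ne',
    mul_one]

section BlaschkeFactor

noncomputable def blaschkeFactor (a w : ℂ) : ℂ := (a - w) / (1 - conj a * w)

variable {a w ζ : ℂ}

theorem one_sub_conj_mul_ne_zero (ha : ‖a‖ < 1) (hw : ‖w‖ ≤ 1) : 1 - conj a * w ≠ 0 := by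
  intro h
  have : ‖conj a * w‖ < 1 := by
    rw [norm_mul, Complex.norm_conj]
    nlinarith [norm_nonneg a, norm_nonneg w]
  rw [← sub_eq_zero.mp h] at this
  simp at this

theorem one_sub_norm_blaschkeFactor_sq (h : 1 - conj a * w ≠ 0) :
    1 - ‖blaschkeFactor a w‖ ^ 2 = (1 - ‖a‖ ^ 2) * (1 - ‖w‖ ^ 2) / ‖1 - conj a * w‖ ^ 2 := by
  have hden : ‖1 - conj a * w‖ ^ 2 - ‖a - w‖ ^ 2 = (1 - ‖a‖ ^ 2) * (1 - ‖w‖ ^ 2) := by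
    simp only [Complex.sq_norm, Complex.normSq_apply, Complex.sub_re, Complex.sub_im,
      Complex.mul_re, Complex.mul_im, Complex.one_re, Complex.one_im, Complex.conj_re,
      Complex.conj_im]
    ring
  rw [blaschkeFactor, norm_div, div_pow, ← hden, one_sub_div (by simpa using h)]

theorem norm_blaschkeFactor_of_norm_eq_one (ha : ‖a‖ < 1) (hζ : ‖ζ‖ = 1) :
    ‖blaschkeFactor a ζ‖ = 1 := by
  have h := one_sub_norm_blaschkeFactor_sq (one_sub_conj_mul_ne_zero ha hζ.le)
  rw [hζ, one_pow, sub_self, mul_zero, zero_div, sub_eq_zero] at h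
  exact (pow_eq_one_iff_of_nonneg (norm_nonneg _) two_ne_zero).mp h.symm

theorem hasDerivAt_blaschkeFactor (h : 1 - conj a * w ≠ 0) :
    HasDerivAt (blaschkeFactor a) ((conj a * a - 1) / (1 - conj a * w) ^ 2) w := by
  have hnum : HasDerivAt (fun w => a - w) (-1) w := (hasDerivAt_id w).const_sub a
  have hden : HasDerivAt (fun w => 1 - conj a * w) (-conj a) w := by
    simpa using ((hasDerivAt_id w).const_mul (conj a)).const_sub 1
  exact (hnum.div hden h).congr_deriv (by ring)

theorem mul_deriv_blaschkeFactor_mul_conj (ha : ‖a‖ < 1) (hζ : ‖ζ‖ = 1) :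
    ζ * deriv (blaschkeFactor a) ζ * conj (blaschkeFactor a ζ) =
      ((1 - ‖a‖ ^ 2) / ‖1 - conj a * ζ‖ ^ 2 : ℝ) := by
  have hd := one_sub_conj_mul_ne_zero ha hζ.le
  have hd' : 1 - a * conj ζ ≠ 0 := by simpa using (map_ne_zero (starRingEnd ℂ)).mpr hd
  have hζζ : ζ * conj ζ = 1 := by simp [Complex.mul_conj', hζ]
  rw [(hasDerivAt_blaschkeFactor hd).deriv, blaschkeFactor]
  push_cast
  rw [← Complex.mul_conj', ← Complex.mul_conj']
  simp only [map_sub, map_mul, map_one, Complex.conj_conj, map_div₀]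
  generalize hu : 1 - conj a * ζ = u at *
  generalize 1 - a * conj ζ = v at *
  field_simp
  linear_combination (1 - conj a * a) * hζζ + (1 - conj a * a) * hu

theorem tendsto_one_sub_norm_blaschkeFactor_sq_div (ha : ‖a‖ < 1) (hζ : ‖ζ‖ = 1) :
    Tendsto (fun w => (1 - ‖blaschkeFactor a w‖ ^ 2) / (1 - ‖w‖ ^ 2)) (𝓝[ball 0 1] ζ)
      (𝓝 ((1 - ‖a‖ ^ 2) / ‖1 - conj a * ζ‖ ^ 2)) := by
  have hcont : ContinuousAt (fun w => (1 - ‖a‖ ^ 2) / ‖1 - conj a * w‖ ^ 2) ζ := by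
    have := one_sub_conj_mul_ne_zero ha hζ.le
    fun_prop (disch := simpa)
  refine (hcont.tendsto.mono_left nhdsWithin_le_nhds).congr' ?_
  filter_upwards [self_mem_nhdsWithin] with w hw
  rw [mem_ball_zero_iff] at hw
  have hw' : 1 - ‖w‖ ^ 2 ≠ 0 := by nlinarith [norm_nonneg w]
  rw [one_sub_norm_blaschkeFactor_sq (one_sub_conj_mul_ne_zero ha hw.le), mul_div_right_comm,
    mul_div_cancel_right₀ _ hw']

end BlaschkeFactor

section BlaschkeProduct

variable {ι : Type*} {a : ι → ℂ} {ζ : ℂ}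

theorem tendsto_norm_blaschkeFactor {a : ℂ} (ha : ‖a‖ < 1) (hζ : ‖ζ‖ = 1) :
    Tendsto (fun w => ‖blaschkeFactor a w‖) (𝓝 ζ) (𝓝 1) := by
  have hcont := (hasDerivAt_blaschkeFactor (one_sub_conj_mul_ne_zero ha hζ.le)).continuousAt
  simpa only [norm_blaschkeFactor_of_norm_eq_one ha hζ] using hcont.norm.tendsto

theorem norm_prod_blaschkeFactor_of_norm_eq_one (s : Finset ι) (ha : ∀ i ∈ s, ‖a i‖ < 1)
    (hζ : ‖ζ‖ = 1) : ‖∏ i ∈ s, blaschkeFactor (a i) ζ‖ = 1 := by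
  rw [norm_prod]
  exact prod_eq_one fun i hi => norm_blaschkeFactor_of_norm_eq_one (ha i hi) hζ

theorem tendsto_one_sub_norm_prod_blaschkeFactor_sq_div (s : Finset ι)
    (ha : ∀ i ∈ s, ‖a i‖ < 1) (hζ : ‖ζ‖ = 1) :
    Tendsto (fun w => (1 - ‖∏ i ∈ s, blaschkeFactor (a i) w‖ ^ 2) / (1 - ‖w‖ ^ 2))
      (𝓝[ball 0 1] ζ) (𝓝 (∑ i ∈ s, (1 - ‖a i‖ ^ 2) / ‖1 - conj (a i) * ζ‖ ^ 2)) :=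
  tendsto_one_sub_norm_prod_sq_div s
    (fun i hi => tendsto_one_sub_norm_blaschkeFactor_sq_div (ha i hi) hζ)
    (fun i hi => (tendsto_norm_blaschkeFactor (ha i hi) hζ).mono_left nhdsWithin_le_nhds)

theorem norm_deriv_prod_blaschkeFactor (s : Finset ι) (ha : ∀ i ∈ s, ‖a i‖ < 1)
    (hζ : ‖ζ‖ = 1) :
    ‖deriv (fun w => ∏ i ∈ s, blaschkeFactor (a i) w) ζ‖ =
      ∑ i ∈ s, (1 - ‖a i‖ ^ 2) / ‖1 - conj (a i) * ζ‖ ^ 2 := by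
  have hprod := deriv_prod_mul_conj s
    (fun i hi => (hasDerivAt_blaschkeFactor
      (one_sub_conj_mul_ne_zero (ha i hi) hζ.le)).differentiableAt)
    (fun i hi => norm_blaschkeFactor_of_norm_eq_one (ha i hi) hζ)
  have hsum : ζ * ∑ i ∈ s, deriv (blaschkeFactor (a i)) ζ * conj (blaschkeFactor (a i) ζ) =
      ((∑ i ∈ s, (1 - ‖a i‖ ^ 2) / ‖1 - conj (a i) * ζ‖ ^ 2 : ℝ) : ℂ) := by
    rw [mul_sum, ofReal_sum]
    exact sum_congr rfl fun i hi => by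
      rw [← mul_assoc, mul_deriv_blaschkeFactor_mul_conj (ha i hi) hζ]
  have hnonneg : 0 ≤ ∑ i ∈ s, (1 - ‖a i‖ ^ 2) / ‖1 - conj (a i) * ζ‖ ^ 2 :=
    sum_nonneg fun i hi => div_nonneg (by nlinarith [ha i hi, norm_nonneg (a i)]) (sq_nonneg _)
  calc ‖deriv (fun w => ∏ i ∈ s, blaschkeFactor (a i) w) ζ‖
      = ‖ζ * (deriv (fun w => ∏ i ∈ s, blaschkeFactor (a i) w) ζ *
          conj (∏ i ∈ s, blaschkeFactor (a i) ζ))‖ := by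
        rw [norm_mul, norm_mul, hζ, Complex.norm_conj,
          norm_prod_blaschkeFactor_of_norm_eq_one s ha hζ, one_mul, mul_one]
    _ = ∑ i ∈ s, (1 - ‖a i‖ ^ 2) / ‖1 - conj (a i) * ζ‖ ^ 2 := by
        rw [hprod, hsum, Complex.norm_real, Real.norm_of_nonneg hnonneg]

end BlaschkeProduct

/-- Let `B` be a finite Blaschke product.  Then for every `ζ` on the unit circle, the
limit as `z → ζ` with `z ∈ 𝔻` of `(1 − |B(z)|²)/(1 − |z|²)` exists and equals `|B'(ζ)|`,
and likewise the limit of `(1 − |B(z)|)/(1 − |z|)` equals `|B'(ζ)|`. -/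
theorem blaschke_boundary_derivative_limit (n : ℕ) (α : ℝ) (z : Fin n → ℂ)
    (hz : ∀ k, ‖z k‖ < 1) (B : ℂ → ℂ)
    (hB : B = fun w => Complex.exp (α * Complex.I) * ∏ k, (z k - w) / (1 - conj (z k) * w))
    (ζ : ℂ) (hζ : ‖ζ‖ = 1) :
    Tendsto (fun w : ℂ => (1 - ‖B w‖ ^ 2) / (1 - ‖w‖ ^ 2))
        (𝓝[Metric.ball (0 : ℂ) 1] ζ) (𝓝 (‖deriv B ζ‖)) ∧
      Tendsto (fun w : ℂ => (1 - ‖B w‖) / (1 - ‖w‖))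
        (𝓝[Metric.ball (0 : ℂ) 1] ζ) (𝓝 (‖deriv B ζ‖)) := by
  set P : ℂ → ℂ := fun w => ∏ k, blaschkeFactor (z k) w
  have hB' : B = fun w => Complex.exp (α * Complex.I) * P w := hB
  have hz' : ∀ k ∈ univ, ‖z k‖ < 1 := fun k _ => hz k
  have hP : DifferentiableAt ℂ P ζ := DifferentiableAt.fun_finsetProd fun k _ =>
    (hasDerivAt_blaschkeFactor (one_sub_conj_mul_ne_zero (hz k) hζ.le)).differentiableAt
  have hnorm : ∀ w, ‖B w‖ = ‖P w‖ := by simp [hB', norm_exp_ofReal_mul_I]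
  have hderiv : ‖deriv B ζ‖ = ∑ k, (1 - ‖z k‖ ^ 2) / ‖1 - conj (z k) * ζ‖ ^ 2 := by
    rw [hB', deriv_const_mul _ hP, norm_mul, norm_exp_ofReal_mul_I, one_mul]
    exact norm_deriv_prod_blaschkeFactor univ hz' hζ
  have hsq : Tendsto (fun w : ℂ => (1 - ‖B w‖ ^ 2) / (1 - ‖w‖ ^ 2))
      (𝓝[ball 0 1] ζ) (𝓝 (‖deriv B ζ‖)) := by
    simpa only [hnorm, hderiv] using tendsto_one_sub_norm_prod_blaschkeFactor_sq_div univ hz' hζ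
  have hnormB : Tendsto (fun w => ‖B w‖) (𝓝[ball 0 1] ζ) (𝓝 1) := by
    have hPζ : ‖P ζ‖ = 1 := norm_prod_blaschkeFactor_of_norm_eq_one univ hz' hζ
    simpa only [hnorm, hPζ] using hP.continuousAt.norm.tendsto.mono_left nhdsWithin_le_nhds
  have hnormw : Tendsto (fun w : ℂ => ‖w‖) (𝓝[ball 0 1] ζ) (𝓝 1) :=
    (continuous_norm.tendsto' ζ 1 hζ).mono_left nhdsWithin_le_nhds
  exact ⟨hsq, tendsto_one_sub_div_one_sub hnormw hnormB hsq⟩
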